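/- The two-parameter Rényi conditional entropy is additive on product distributions: for all α ∈ (0,1)∪(1,∞) and β ∈ (0,∞), if P_XY is a probability distribution on 𝒳×𝒴 and Q_{X'Y'} is a probability distribution on 𝒳'×𝒴', then the two-parameter Rényi conditional entropy of the product distribution P_XY × Q_{X'Y'} on (𝒳×𝒳')×(𝒴×𝒴') (with joint variable (X,X') conditioned on (Y,Y')) equals H̃_{α,β}(X|Y)_{P_XY} + H̃_{α,β}(X'|Y')_{Q_{X'Y'}}. -/

import Mathlib

open scoped BigOperators

noncomputable section

variable {𝓧 𝓨 : Type*} [Fintype 𝓧] [Fintype 𝓨]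

/-- Marginal distribution of the second component. -/
def pY (P : 𝓧 × 𝓨 → ℝ) (y : 𝓨) : ℝ := ∑ x, P (x, y)

/-- Conditional distribution `P_{X|Y}(x|y)`. -/
def pCond (P : 𝓧 × 𝓨 → ℝ) (x : 𝓧) (y : 𝓨) : ℝ := P (x, y) / pY P y

/-- Two-parameter Rényi conditional entropy `H̃_{α,β}(X|Y)`. -/
def Htilde (P : 𝓧 × 𝓨 → ℝ) (α β : ℝ) : ℝ :=
  α / (β * (1 - α)) *
    Real.logb 2 (∑ y, if 0 < pY P y then
      pY P y * (∑ x, pCond P x y ^ α) ^ (β / α) else 0)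

/-!
`H̃_{α,β}` is a constant times the logarithm of the moment
`Σ_y P_Y(y) (Σ_x P_{X|Y}(x|y)^α)^{β/α}`. For a product distribution both the marginal and the
conditional distribution factor, so each summand of the moment, and hence the moment itself,
factors; the moments are positive, and the logarithm turns the product into a sum.
-/

def momentTerm (P : 𝓧 × 𝓨 → ℝ) (α β : ℝ) (y : 𝓨) : ℝ :=
  if 0 < pY P y then pY P y * (∑ x, pCond P x y ^ α) ^ (β / α) else 0

def moment (P : 𝓧 × 𝓨 → ℝ) (α β : ℝ) : ℝ := ∑ y, momentTerm P α β y

theorem Htilde_eq_mul_logb_moment (P : 𝓧 × 𝓨 → ℝ) (α β : ℝ) :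
    Htilde P α β = α / (β * (1 - α)) * Real.logb 2 (moment P α β) := rfl

omit [Fintype 𝓨] in
theorem pY_nonneg {P : 𝓧 × 𝓨 → ℝ} (hP : ∀ p, 0 ≤ P p) (y : 𝓨) : 0 ≤ pY P y :=
  Finset.sum_nonneg fun _ _ => hP _

omit [Fintype 𝓨] in
theorem pCond_nonneg {P : 𝓧 × 𝓨 → ℝ} (hP : ∀ p, 0 ≤ P p) (x : 𝓧) (y : 𝓨) :
    0 ≤ pCond P x y :=
  div_nonneg (hP _) (pY_nonneg hP y)

omit [Fintype 𝓨] in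
theorem momentTerm_nonneg {P : 𝓧 × 𝓨 → ℝ} (hP : ∀ p, 0 ≤ P p) (α β : ℝ) (y : 𝓨) :
    0 ≤ momentTerm P α β y := by
  unfold momentTerm
  split_ifs with hy
  · exact mul_nonneg hy.le <| Real.rpow_nonneg
      (Finset.sum_nonneg fun x _ => Real.rpow_nonneg (pCond_nonneg hP x y) α) _
  · exact le_rfl

omit [Fintype 𝓨] in
theorem momentTerm_pos {P : 𝓧 × 𝓨 → ℝ} (hP : ∀ p, 0 ≤ P p) (α β : ℝ) {y : 𝓨}
    (hy : 0 < pY P y) : 0 < momentTerm P α β y := by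
  obtain ⟨x, -, hx⟩ : ∃ x ∈ Finset.univ, (0 : ℝ) < P (x, y) :=
    Finset.exists_lt_of_sum_lt (by simpa [pY] using hy)
  have hsum : 0 < ∑ x, pCond P x y ^ α :=
    Finset.sum_pos' (fun x _ => Real.rpow_nonneg (pCond_nonneg hP x y) α)
      ⟨x, Finset.mem_univ _, Real.rpow_pos_of_pos (div_pos hx hy) α⟩
  rw [momentTerm, if_pos hy]
  exact mul_pos hy (Real.rpow_pos_of_pos hsum _)

theorem moment_pos {P : 𝓧 × 𝓨 → ℝ} (hP : ∀ p, 0 ≤ P p) (hPpos : 0 < ∑ p, P p) (α β : ℝ) :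
    0 < moment P α β := by
  have hmarg : ∑ y, pY P y = ∑ p, P p := by
    rw [Fintype.sum_prod_type, Finset.sum_comm]
    rfl
  obtain ⟨y, -, hy⟩ : ∃ y ∈ Finset.univ, (0 : ℝ) < pY P y :=
    Finset.exists_lt_of_sum_lt (by simpa [hmarg] using hPpos)
  exact Finset.sum_pos' (fun y _ => momentTerm_nonneg hP α β y)
    ⟨y, Finset.mem_univ _, momentTerm_pos hP α β hy⟩

section Product

variable {𝓧' 𝓨' : Type*} [Fintype 𝓧'] [Fintype 𝓨']

def prodDist (P : 𝓧 × 𝓨 → ℝ) (Q : 𝓧' × 𝓨' → ℝ) : (𝓧 × 𝓧') × (𝓨 × 𝓨') → ℝ :=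
  fun p => P (p.1.1, p.2.1) * Q (p.1.2, p.2.2)

omit [Fintype 𝓨] [Fintype 𝓨'] in
theorem pY_prodDist (P : 𝓧 × 𝓨 → ℝ) (Q : 𝓧' × 𝓨' → ℝ) (y : 𝓨) (y' : 𝓨') :
    pY (prodDist P Q) (y, y') = pY P y * pY Q y' := by
  rw [pY, Fintype.sum_prod_type, pY, pY, Fintype.sum_mul_sum]
  rfl

omit [Fintype 𝓨] [Fintype 𝓨'] in
theorem pCond_prodDist (P : 𝓧 × 𝓨 → ℝ) (Q : 𝓧' × 𝓨' → ℝ) (x : 𝓧) (x' : 𝓧') (y : 𝓨)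
    (y' : 𝓨') : pCond (prodDist P Q) (x, x') (y, y') = pCond P x y * pCond Q x' y' := by
  rw [pCond, pY_prodDist, pCond, pCond, div_mul_div_comm]
  rfl

omit [Fintype 𝓨] [Fintype 𝓨'] in
theorem sum_pCond_rpow_prodDist {P : 𝓧 × 𝓨 → ℝ} {Q : 𝓧' × 𝓨' → ℝ} (hP : ∀ p, 0 ≤ P p)
    (hQ : ∀ p, 0 ≤ Q p) (α : ℝ) (y : 𝓨) (y' : 𝓨') :
    ∑ x, pCond (prodDist P Q) x (y, y') ^ α
      = (∑ x, pCond P x y ^ α) * ∑ x', pCond Q x' y' ^ α := by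
  rw [Fintype.sum_prod_type, Fintype.sum_mul_sum]
  refine Finset.sum_congr rfl fun x _ => Finset.sum_congr rfl fun x' _ => ?_
  rw [pCond_prodDist, Real.mul_rpow (pCond_nonneg hP x y) (pCond_nonneg hQ x' y')]

omit [Fintype 𝓨] [Fintype 𝓨'] in
theorem momentTerm_prodDist {P : 𝓧 × 𝓨 → ℝ} {Q : 𝓧' × 𝓨' → ℝ} (hP : ∀ p, 0 ≤ P p)
    (hQ : ∀ p, 0 ≤ Q p) (α β : ℝ) (y : 𝓨) (y' : 𝓨') :
    momentTerm (prodDist P Q) α β (y, y') = momentTerm P α β y * momentTerm Q α β y' := by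
  have hPy := pY_nonneg hP y
  have hQy := pY_nonneg hQ y'
  unfold momentTerm
  rw [pY_prodDist]
  by_cases hp : 0 < pY P y
  · by_cases hq : 0 < pY Q y'
    · rw [if_pos (mul_pos hp hq), if_pos hp, if_pos hq, sum_pCond_rpow_prodDist hP hQ,
        Real.mul_rpow (Finset.sum_nonneg fun x _ => Real.rpow_nonneg (pCond_nonneg hP x y) α)
          (Finset.sum_nonneg fun x _ => Real.rpow_nonneg (pCond_nonneg hQ x y') α)]
      ring
    · rw [le_antisymm (not_lt.mp hq) hQy]
      simp
  · rw [le_antisymm (not_lt.mp hp) hPy]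
    simp

theorem moment_prodDist {P : 𝓧 × 𝓨 → ℝ} {Q : 𝓧' × 𝓨' → ℝ} (hP : ∀ p, 0 ≤ P p)
    (hQ : ∀ p, 0 ≤ Q p) (α β : ℝ) :
    moment (prodDist P Q) α β = moment P α β * moment Q α β := by
  rw [moment, Fintype.sum_prod_type, moment, moment, Fintype.sum_mul_sum]
  exact Finset.sum_congr rfl fun y _ => Finset.sum_congr rfl fun y' _ =>
    momentTerm_prodDist hP hQ α β y y'

end Product

theorem Htilde_additive_general
    {𝓧' 𝓨' : Type*} [Fintype 𝓧'] [Fintype 𝓨']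
    (P : 𝓧 × 𝓨 → ℝ) (hP : ∀ p, 0 ≤ P p) (hPsum : ∑ p, P p = 1)
    (Q : 𝓧' × 𝓨' → ℝ) (hQ : ∀ p, 0 ≤ Q p) (hQsum : ∑ p, Q p = 1)
    (α β : ℝ) :
    Htilde (fun p : (𝓧 × 𝓧') × (𝓨 × 𝓨') =>
        P (p.1.1, p.2.1) * Q (p.1.2, p.2.2)) α β
      = Htilde P α β + Htilde Q α β := by
  have hmP := moment_pos hP (hPsum ▸ one_pos) α β
  have hmQ := moment_pos hQ (hQsum ▸ one_pos) α β
  change Htilde (prodDist P Q) α β = _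
  rw [Htilde_eq_mul_logb_moment, moment_prodDist hP hQ, Real.logb_mul hmP.ne' hmQ.ne',
    mul_add]
  rfl

/-- additivity of the two-parameter Rényi conditional entropy on
product distributions. -/
theorem Htilde_additive
    {𝓧' 𝓨' : Type*} [Fintype 𝓧'] [Fintype 𝓨']
    [Nonempty 𝓧] [Nonempty 𝓨] [Nonempty 𝓧'] [Nonempty 𝓨']
    (P : 𝓧 × 𝓨 → ℝ) (hP : ∀ p, 0 ≤ P p) (hPsum : ∑ p, P p = 1)
    (Q : 𝓧' × 𝓨' → ℝ) (hQ : ∀ p, 0 ≤ Q p) (hQsum : ∑ p, Q p = 1)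
    (α β : ℝ) (hα : 0 < α) (hα1 : α ≠ 1) (hβ : 0 < β) :
    Htilde (fun p : (𝓧 × 𝓧') × (𝓨 × 𝓨') =>
        P (p.1.1, p.2.1) * Q (p.1.2, p.2.2)) α β
      = Htilde P α β + Htilde Q α β :=
  Htilde_additive_general P hP hPsum Q hQ hQsum α β
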